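/- Let n ≥ 1, let s : ℝ → ℝ be continuously differentiable with s(0) = 0 and s(a) > 0 for all a ≠ 0, and let m : ℝ^n → ℝ^n be continuously differentiable with m_i(x) > 0 for all x ∈ ℝ^n and all i < n. Define w : ℝ^n → ℝ^n by w_i(x) = s(y_i − y_{i+1}) · m_i(x) for i < n and w_n(x) = m_n(x), where y is the sorted version of x, and define f : ℝ^n → ℝ^n by f(x)_{σ(i)} = Σ_{j=i}^{n} w_j(x) for any permutation σ sorting x. Then f is B-differentiable on ℝ^n: f is locally Lipschitz continuous, and for every x ∈ ℝ^n and every direction d ∈ ℝ^n the one-sided directional derivative exists, i.e., the limit of (f(x + t·d) − f(x))/t as t → 0⁺ exists in ℝ^n. -/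

import Mathlib

open Filter Topology

/-- `σ` is a permutation sorting `x` in nonincreasing order. -/
def SortsPerm (n : ℕ) (σ : Equiv.Perm (Fin n)) (x : Fin n → ℝ) : Prop :=
  Antitone (x ∘ σ)

/-- The sorted (nonincreasing) version of `x`. -/
noncomputable def sortedDesc (n : ℕ) (x : Fin n → ℝ) : Fin n → ℝ :=
  fun i => x (Tuple.sort (fun j => -x j) i)

/-- `w_i(x) = s(y_i - y_{i+1}) * m_i(x)` for `i < n` and `w_n(x) = m_n(x)`,
where `y` is the sorted version of `x`. -/
noncomputable def wFun (n : ℕ) (s : ℝ → ℝ) (m : (Fin n → ℝ) → (Fin n → ℝ)) :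
    (Fin n → ℝ) → Fin n → ℝ :=
  fun x i =>
    if h : (i : ℕ) + 1 < n then
      s (sortedDesc n x i - sortedDesc n x ⟨(i : ℕ) + 1, h⟩) * m x i
    else m x i

/-! Capping the sorted vector `y` at `x k` gives the closed form
`f x k = ∑ j, s (min y_j x_k - min y_{j+1} x_k) * m_j x` (the gaps above `x k` are capped to `0`
and `s 0 = 0`), and sorted coordinates are `1`-Lipschitz in `x`; so `f` is locally Lipschitz.
Along a ray `x + t • d`, a permutation sorting `x` lexicographically by `(x, d)` keeps sorting
`x + t • d` for all small `t ≥ 0`, and for a fixed sorting permutation `f` is a differentiable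
expression in `x`; so the one-sided directional derivative is that expression's derivative. -/

open Finset

section Sorting

variable {n : ℕ}

lemma sortsPerm_sort (x : Fin n → ℝ) : SortsPerm n (Tuple.sort fun j => -x j) x :=
  fun _ _ hab => neg_le_neg_iff.mp (Tuple.monotone_sort (fun j => -x j) hab)

lemma SortsPerm.sortedDesc_eq {σ : Equiv.Perm (Fin n)} {x : Fin n → ℝ} (hσ : SortsPerm n σ x) :
    sortedDesc n x = x ∘ σ := by
  have h := Tuple.unique_monotone (f := fun j => -x j) (fun _ _ hab => neg_le_neg (hσ hab))
    (Tuple.monotone_sort fun j => -x j)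
  funext i
  simpa [sortedDesc] using (congrFun h i).symm

lemma sortedDesc_antitone (x : Fin n → ℝ) : Antitone (sortedDesc n x) := by
  rw [(sortsPerm_sort x).sortedDesc_eq]
  exact sortsPerm_sort x

lemma Equiv.Perm.exists_le_le_apply (π : Equiv.Perm (Fin n)) (j : Fin n) :
    ∃ u ≤ j, j ≤ π u := by
  by_contra! h
  have := card_le_card_of_injOn π (s := Iic j) (t := Iio j)
    (fun u hu => mem_Iio.mpr (h u (mem_Iic.mp hu))) π.injective.injOn
  simp at this

lemma sortedDesc_mono {x z : Fin n → ℝ} (hxz : x ≤ z) (j : Fin n) :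
    sortedDesc n x j ≤ sortedDesc n z j := by
  set σ := Tuple.sort fun j => -x j
  set τ := Tuple.sort fun j => -z j
  obtain ⟨u, huj, hju⟩ := Equiv.Perm.exists_le_le_apply (σ.trans τ.symm) j
  rw [(sortsPerm_sort x).sortedDesc_eq, (sortsPerm_sort z).sortedDesc_eq]
  calc x (σ j) ≤ x (σ u) := sortsPerm_sort x huj
    _ ≤ z (σ u) := hxz _
    _ = z (τ (τ.symm (σ u))) := by rw [Equiv.apply_symm_apply]
    _ ≤ z (τ j) := sortsPerm_sort z hju

lemma sortedDesc_add_const (x : Fin n → ℝ) (c : ℝ) (j : Fin n) :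
    sortedDesc n (x + fun _ => c) j = sortedDesc n x j + c := by
  have hσ := sortsPerm_sort x
  have hσc : SortsPerm n (Tuple.sort fun j => -x j) (x + fun _ => c) :=
    fun _ _ hab => by simpa using hσ hab
  rw [hσ.sortedDesc_eq, hσc.sortedDesc_eq]
  rfl

lemma lipschitzWith_sortedDesc (j : Fin n) :
    LipschitzWith 1 fun x : Fin n → ℝ => sortedDesc n x j := by
  refine LipschitzWith.of_le_add_mul 1 fun x z => ?_
  have hxz : x ≤ z + fun _ => dist x z := fun i => by
    have := (abs_sub_le_iff.mp ((Real.dist_eq _ _).symm.trans_le (dist_le_pi_dist x z i))).1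
    simp only [Pi.add_apply]
    linarith
  simpa [sortedDesc_add_const] using sortedDesc_mono hxz j

lemma eventually_nonneg_add_mul {p q : ℝ} (h : 0 < p ∨ p = 0 ∧ 0 ≤ q) :
    ∀ᶠ t in 𝓝[≥] (0 : ℝ), 0 ≤ p + t * q := by
  rcases h with hp | ⟨rfl, hq⟩
  · have hcont : Tendsto (fun t : ℝ => p + t * q) (𝓝 0) (𝓝 p) := by
      simpa using (continuous_const.add (continuous_id.mul continuous_const)).tendsto
        (f := fun t : ℝ => p + t * q) 0
    exact nhdsWithin_le_nhds ((hcont.eventually (eventually_gt_nhds hp)).mono fun _ => le_of_lt)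
  · filter_upwards [self_mem_nhdsWithin] with t (ht : 0 ≤ t)
    simpa using mul_nonneg ht hq

/-- Sorting lexicographically by `(x, d)` breaks the ties of `x` in the order that `x + t • d`
has for small `t > 0`. -/
lemma eventually_sortsPerm_add_smul (x d : Fin n → ℝ) :
    ∀ᶠ t in 𝓝[≥] (0 : ℝ),
      SortsPerm n (Tuple.sort fun j => toLex (-x j, -d j)) (x + t • d) := by
  set σ := Tuple.sort fun j => toLex (-x j, -d j)
  have hpair : ∀ a b, ∀ᶠ t in 𝓝[≥] (0 : ℝ), a ≤ b → (x + t • d) (σ b) ≤ (x + t • d) (σ a) := by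
    intro a b
    by_cases hab : a ≤ b
    · have hlex := Prod.Lex.le_iff.mp (Tuple.monotone_sort (fun j => toLex (-x j, -d j)) hab)
      simp only [Function.comp_apply, ofLex_toLex, neg_lt_neg_iff, neg_inj, neg_le_neg_iff] at hlex
      have hgap := eventually_nonneg_add_mul (p := x (σ a) - x (σ b)) (q := d (σ a) - d (σ b))
        (hlex.imp sub_pos.mpr fun h => ⟨sub_eq_zero.mpr h.1, sub_nonneg.mpr h.2⟩)
      filter_upwards [hgap] with t ht _
      simp only [Pi.add_apply, Pi.smul_apply, smul_eq_mul]
      linarith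
    · exact Eventually.of_forall fun _ h => absurd h hab
  filter_upwards [eventually_all.mpr fun a => eventually_all.mpr (hpair a)] with t ht a b hab
  exact ht a b hab

end Sorting

section LocallyLipschitz

variable {α : Type*} [PseudoEMetricSpace α]

lemma LocallyLipschitz.real_mul {f g : α → ℝ} (hf : LocallyLipschitz f)
    (hg : LocallyLipschitz g) : LocallyLipschitz fun a => f a * g a :=
  (contDiff_fst.mul contDiff_snd : ContDiff ℝ 1 fun p : ℝ × ℝ => p.1 * p.2).locallyLipschitz.comp
    (hf.prodMk hg)

lemma LocallyLipschitz.fun_sum {ι E : Type*} [SeminormedAddCommGroup E] {u : Finset ι}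
    {f : ι → α → E} (hf : ∀ i ∈ u, LocallyLipschitz (f i)) :
    LocallyLipschitz fun a => ∑ i ∈ u, f i a := by
  classical
  induction u using Finset.induction_on with
  | empty => simpa using LocallyLipschitz.const (0 : E)
  | insert i u hi ih =>
    simp only [sum_insert hi]
    exact (hf i (mem_insert_self i u)).add (ih fun j hj => hf j (mem_insert_of_mem hj))

lemma locallyLipschitz_pi {ι : Type*} [Fintype ι] {β : ι → Type*}
    [∀ i, PseudoEMetricSpace (β i)] {f : α → ∀ i, β i}
    (hf : ∀ i, LocallyLipschitz fun a => f a i) : LocallyLipschitz f := by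
  intro a
  choose K t ht hK using fun i => hf i a
  refine ⟨univ.sup K, ⋂ i, t i, iInter_mem.mpr ht, fun b hb c hc => ?_⟩
  simp only [Set.mem_iInter] at hb hc
  refine edist_pi_le_iff.mpr fun i => (hK i (hb i) (hc i)).trans ?_
  gcongr
  exact le_sup (mem_univ i)

end LocallyLipschitz

/-- The weights of `wFun` for an arbitrary sequence `y` in place of the sorted `x`:
`wFun n s m x = gapWeight n s (sortedDesc n x) (m x)` holds by `rfl`. -/
def gapWeight (n : ℕ) (s : ℝ → ℝ) (y μ : Fin n → ℝ) (j : Fin n) : ℝ :=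
  if h : (j : ℕ) + 1 < n then s (y j - y ⟨(j : ℕ) + 1, h⟩) * μ j else μ j

section GapWeight

variable {n : ℕ} {s : ℝ → ℝ}

/-- Capping the sequence at `y i` turns the gaps before `i` into `0` and leaves the later ones
unchanged. -/
lemma sum_gapWeight_min_eq_sum_Ici (hs0 : s 0 = 0) {y : Fin n → ℝ} (hy : Antitone y)
    (μ : Fin n → ℝ) (i : Fin n) :
    ∑ j, gapWeight n s (fun j => min (y j) (y i)) μ j = ∑ j ∈ Ici i, gapWeight n s y μ j := by
  classical
  rw [← sum_subset (subset_univ (Ici i))]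
  · refine sum_congr rfl fun j hj => ?_
    have hij : i ≤ j := mem_Ici.mp hj
    unfold gapWeight
    split_ifs with h
    · dsimp only
      rw [min_eq_left (hy hij), min_eq_left (hy (hij.trans (Fin.le_def.mpr (by simp))))]
    · rfl
  · intro j _ hj
    have hji : j < i := by simpa using hj
    have h : (j : ℕ) + 1 < n := by omega
    rw [gapWeight, dif_pos h, min_eq_right (hy hji.le),
      min_eq_right (hy (Fin.le_def.mpr (by simpa using hji))), sub_self, hs0, zero_mul]

variable {α : Type*} {Y M : α → Fin n → ℝ}

lemma LocallyLipschitz.gapWeight [PseudoEMetricSpace α] (hs : LocallyLipschitz s)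
    (hY : ∀ j, LocallyLipschitz fun a => Y a j) (hM : ∀ j, LocallyLipschitz fun a => M a j)
    (j : Fin n) : LocallyLipschitz fun a => gapWeight n s (Y a) (M a) j := by
  unfold _root_.gapWeight
  split_ifs
  · exact (hs.comp ((hY _).sub (hY _))).real_mul (hM j)
  · exact hM j

lemma Differentiable.gapWeight [NormedAddCommGroup α] [NormedSpace ℝ α]
    (hs : Differentiable ℝ s) (hY : Differentiable ℝ Y) (hM : Differentiable ℝ M) (j : Fin n) :
    Differentiable ℝ fun a => gapWeight n s (Y a) (M a) j := by
  have hY' := differentiable_pi.mp hY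
  unfold _root_.gapWeight
  split_ifs
  · exact (hs.comp ((hY' _).sub (hY' _))).mul (differentiable_pi.mp hM j)
  · exact differentiable_pi.mp hM j

end GapWeight

section Representation

variable {n : ℕ} {s : ℝ → ℝ} {m f : (Fin n → ℝ) → (Fin n → ℝ)}
  (hf : ∀ (x : Fin n → ℝ) (σ : Equiv.Perm (Fin n)), SortsPerm n σ x →
      ∀ i : Fin n, f x (σ i) = ∑ j ∈ Ici i, wFun n s m x j)
include hf

lemma apply_eq_sum_gapWeight_of_sortsPerm {x : Fin n → ℝ} {σ : Equiv.Perm (Fin n)}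
    (hσ : SortsPerm n σ x) (k : Fin n) :
    f x k = ∑ j ∈ Ici (σ.symm k), gapWeight n s (x ∘ σ) (m x) j := by
  conv_lhs => rw [← σ.apply_symm_apply k]
  rw [hf x σ hσ, ← hσ.sortedDesc_eq]
  rfl

lemma apply_eq_sum_gapWeight_min (hs0 : s 0 = 0) (x : Fin n → ℝ) (k : Fin n) :
    f x k = ∑ j, gapWeight n s (fun j => min (sortedDesc n x j) (x k)) (m x) j := by
  set σ := Tuple.sort fun j => -x j
  have hσ := sortsPerm_sort x
  have hk : sortedDesc n x (σ.symm k) = x k := by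
    rw [hσ.sortedDesc_eq, Function.comp_apply, σ.apply_symm_apply]
  rw [apply_eq_sum_gapWeight_of_sortsPerm hf hσ, ← hk,
    sum_gapWeight_min_eq_sum_Ici hs0 (sortedDesc_antitone x), hσ.sortedDesc_eq]

end Representation

lemma tendsto_slope_zero_right_of_eventuallyEq_of_hasFDerivAt {E F : Type*}
    [NormedAddCommGroup E] [NormedSpace ℝ E] [NormedAddCommGroup F] [NormedSpace ℝ F]
    {f g : E → F} {g' : E →L[ℝ] F} {x : E} (hg : HasFDerivAt g g' x) (d : E)
    (hfg : ∀ᶠ t in 𝓝[≥] (0 : ℝ), f (x + t • d) = g (x + t • d)) :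
    Tendsto (fun t : ℝ => t⁻¹ • (f (x + t • d) - f x)) (𝓝[>] 0) (𝓝 (g' d)) := by
  have hx : f x = g x := by simpa using hfg.self_of_nhdsWithin Set.self_mem_Ici
  refine (hg.hasLineDerivAt d).tendsto_slope_zero_right.congr' ?_
  filter_upwards [nhdsWithin_mono 0 Set.Ioi_subset_Ici_self hfg] with t ht
  rw [ht, hx]

theorem stmt_14_general (n : ℕ) (s : ℝ → ℝ)
    (hs : ContDiff ℝ 1 s) (hs0 : s 0 = 0)
    (m : (Fin n → ℝ) → (Fin n → ℝ)) (hm : ContDiff ℝ 1 m)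
    (f : (Fin n → ℝ) → (Fin n → ℝ))
    (hfdef : ∀ (x : Fin n → ℝ) (σ : Equiv.Perm (Fin n)), SortsPerm n σ x →
      ∀ i : Fin n, f x (σ i) = ∑ j ∈ Finset.Ici i, wFun n s m x j) :
    LocallyLipschitz f ∧
      ∀ (x d : Fin n → ℝ), ∃ L : Fin n → ℝ,
        Tendsto (fun t : ℝ => t⁻¹ • (f (x + t • d) - f x)) (𝓝[>] (0 : ℝ)) (𝓝 L) := by
  refine ⟨?_, fun x d => ?_⟩
  · rw [show f = _ from funext₂ (apply_eq_sum_gapWeight_min hfdef hs0)]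
    refine locallyLipschitz_pi fun k => LocallyLipschitz.fun_sum fun j _ =>
      hs.locallyLipschitz.gapWeight (fun i => ?_) (fun i => ?_) j
    · exact (lipschitzWith_sortedDesc i).locallyLipschitz.min (LipschitzWith.eval k).locallyLipschitz
    · exact (contDiff_pi.mp hm i).locallyLipschitz
  · set σ := Tuple.sort fun j => toLex (-x j, -d j)
    have hG : Differentiable ℝ fun v k => ∑ j ∈ Ici (σ.symm k), gapWeight n s (v ∘ σ) (m v) j :=
      differentiable_pi.mpr fun k => Differentiable.fun_sum fun j _ =>
        (hs.differentiable one_ne_zero).gapWeight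
          (differentiable_pi.mpr fun i => differentiable_apply (σ i))
          (hm.differentiable one_ne_zero) j
    exact ⟨_, tendsto_slope_zero_right_of_eventuallyEq_of_hasFDerivAt (hG x).hasFDerivAt d
      ((eventually_sortsPerm_add_smul x d).mono fun t ht =>
        funext (apply_eq_sum_gapWeight_of_sortsPerm hfdef ht))⟩

theorem stmt_14 (n : ℕ) (hn : 1 ≤ n) (s : ℝ → ℝ)
    (hs : ContDiff ℝ 1 s) (hs0 : s 0 = 0) (hspos : ∀ a : ℝ, a ≠ 0 → 0 < s a)
    (m : (Fin n → ℝ) → (Fin n → ℝ)) (hm : ContDiff ℝ 1 m)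
    (hmpos : ∀ (x : Fin n → ℝ) (i : Fin n), (i : ℕ) + 1 < n → 0 < m x i)
    (f : (Fin n → ℝ) → (Fin n → ℝ))
    (hfdef : ∀ (x : Fin n → ℝ) (σ : Equiv.Perm (Fin n)), SortsPerm n σ x →
      ∀ i : Fin n, f x (σ i) = ∑ j ∈ Finset.Ici i, wFun n s m x j) :
    LocallyLipschitz f ∧
      ∀ (x d : Fin n → ℝ), ∃ L : Fin n → ℝ,
        Tendsto (fun t : ℝ => t⁻¹ • (f (x + t • d) - f x)) (𝓝[>] (0 : ℝ)) (𝓝 L) :=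
  stmt_14_general n s hs hs0 m hm f hfdef
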